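/- Per-period identification step: fix an integer k ≥ 1 and adopt the core setup. Let Y_k, Y_{k−1}, Y_k*, Y_{k−1}* be integrable random variables with Y_k* = Y_k a.s. on B_k and Y_{k−1}* = Y_{k−1} a.s. on B_k. Assume parallel trends: for every m ∈ {1,…,k} there exists a 𝒲_m-measurable random variable h_m that is simultaneously a version of the conditional expectation of Y_k* − Y_{k−1}* given 𝒲_m under P(·|B_{m−1}) and a version of the conditional expectation of Y_k* − Y_{k−1}* given 𝒲_m under P(·|B_m). Then E_P[Y_k* − Y_{k−1}*] = φ_{k,k} − φ_{k−1,k}, where φ_{k,k} and φ_{k−1,k} are built from the observed outcomes Y_k and Y_{k−1} respectively by the iterated conditional-expectation recursion, and the conclusion holds for any choice of versions in that recursion. -/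

import Mathlib

/-!
Write `D = Y_k* - Y_{k-1}*`. By downward induction on `m`, `Q^{k,k,m} - Q^{k-1,k,m}` is a
version of `E[D | 𝒲_m]` under `P(·|B_{m-1})`. Under `P(·|B_m)` this follows from linearity and
the tower property (for `m = k`, from `D = Y_k - Y_{k-1}` on `B_k`). Parallel trends supplies a
single `𝒲_m`-measurable version of `E[D | 𝒲_m]` under both measures, and positivity transports
a.e. equalities and integrability of `𝒲_m`-measurable functions from `P(·|B_m)` to
`P(·|B_{m-1})`, since `ε P(A | B_{m-1}) ≤ P(A ∩ B_m | B_{m-1})` for `A ∈ 𝒲_m`. At `m = 1`,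
`P(·|B_0) = P`, and integrating `E[D | 𝒲_1]` gives the identity.
-/

open MeasureTheory ProbabilityTheory

namespace ProbabilityTheory

variable {Ω : Type*} {m m₀ : MeasurableSpace Ω} {μ : Measure Ω} {s t : Set Ω} {p f g : Ω → ℝ}
  {ε : ℝ}

lemma restrict_eq_measure_smul_cond [IsFiniteMeasure μ] : μ.restrict s = μ s • μ[|s] := by
  by_cases hs : μ s = 0
  · simp [Measure.restrict_eq_zero.2 hs, hs]
  · rw [cond, smul_smul, ENNReal.mul_inv_cancel hs (measure_ne_top μ s), one_smul]

lemma cond_eq_self_of_measure_eq_one [IsProbabilityMeasure μ] (hs : MeasurableSet s)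
    (h : μ s = 1) : μ[|s] = μ := by
  rw [cond, h, inv_one, one_smul,
    Measure.restrict_eq_self_of_ae_mem (mem_ae_iff.2 ((prob_compl_eq_zero_iff hs).2 h))]

lemma _root_.MeasureTheory.Integrable.cond (hf : Integrable f μ) : Integrable f μ[|s] := by
  by_cases hs : μ s = 0
  · simp [cond_eq_zero_of_meas_eq_zero hs]
  · exact hf.restrict.smul_measure (ENNReal.inv_ne_top.2 hs)

lemma ofReal_mul_measure_le_measure_inter [IsFiniteMeasure μ] (hm : m ≤ m₀)
    (hs : MeasurableSet s) (hp : p =ᵐ[μ] μ[s.indicator (fun _ => (1 : ℝ))|m])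
    (hpε : ∀ᵐ ω ∂μ, ε ≤ p ω) (ht : MeasurableSet[m] t) :
    ENNReal.ofReal ε * μ t ≤ μ (t ∩ s) := by
  have hp_int : Integrable p μ := integrable_condExp.congr hp.symm
  have hreal : ε * μ.real t ≤ μ.real (t ∩ s) :=
    calc ε * μ.real t = ∫ _ in t, ε ∂μ := by rw [setIntegral_const, smul_eq_mul, mul_comm]
      _ ≤ ∫ ω in t, p ω ∂μ :=
        integral_mono_ae (integrable_const ε) hp_int.restrict (ae_restrict_of_ae hpε)
      _ = ∫ ω in t, μ[s.indicator (fun _ => (1 : ℝ))|m] ω ∂μ :=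
        integral_congr_ae (ae_restrict_of_ae hp)
      _ = ∫ ω in t, s.indicator (fun _ => (1 : ℝ)) ω ∂μ :=
        setIntegral_condExp hm ((integrable_const 1).indicator hs) ht
      _ = μ.real (t ∩ s) := by
        rw [integral_indicator hs, setIntegral_const, smul_eq_mul, mul_one,
          measureReal_restrict_apply hs, Set.inter_comm]
  rw [← ofReal_measureReal, ← ofReal_measureReal, ← ENNReal.ofReal_mul' measureReal_nonneg]
  exact ENNReal.ofReal_le_ofReal hreal

lemma trim_le_smul_trim_restrict [IsFiniteMeasure μ] (hm : m ≤ m₀) (hs : MeasurableSet s)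
    (hε : 0 < ε) (hp : p =ᵐ[μ] μ[s.indicator (fun _ => (1 : ℝ))|m])
    (hpε : ∀ᵐ ω ∂μ, ε ≤ p ω) :
    μ.trim hm ≤ (ENNReal.ofReal ε)⁻¹ • (μ.restrict s).trim hm := by
  refine Measure.le_iff.2 fun t ht => ?_
  rw [Measure.smul_apply, trim_measurableSet_eq hm ht, trim_measurableSet_eq hm ht,
    Measure.restrict_apply (hm t ht), smul_eq_mul,
    ← ENNReal.mul_le_iff_le_inv (ENNReal.ofReal_pos.2 hε).ne' ENNReal.ofReal_ne_top]
  exact ofReal_mul_measure_le_measure_inter hm hs hp hpε ht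

lemma ae_eq_of_ae_eq_cond [IsFiniteMeasure μ] (hm : m ≤ m₀) (hs : MeasurableSet s)
    (hε : 0 < ε) (hp : p =ᵐ[μ] μ[s.indicator (fun _ => (1 : ℝ))|m])
    (hpε : ∀ᵐ ω ∂μ, ε ≤ p ω) (hf : StronglyMeasurable[m] f) (hg : StronglyMeasurable[m] g)
    (hfg : f =ᵐ[μ[|s]] g) : f =ᵐ[μ] g := by
  have hfg_restrict : f =ᵐ[μ.restrict s] g := by
    rw [restrict_eq_measure_smul_cond]
    exact Measure.smul_absolutelyContinuous.ae_eq hfg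
  refine ae_eq_of_ae_eq_trim ((Measure.absolutelyContinuous_of_le_smul
    (trim_le_smul_trim_restrict hm hs hε hp hpε)).ae_eq ?_)
  exact hf.ae_eq_trim_of_stronglyMeasurable hm hg hfg_restrict

lemma _root_.MeasureTheory.Integrable.of_cond [IsFiniteMeasure μ] (hm : m ≤ m₀)
    (hs : MeasurableSet s) (hε : 0 < ε) (hp : p =ᵐ[μ] μ[s.indicator (fun _ => (1 : ℝ))|m])
    (hpε : ∀ᵐ ω ∂μ, ε ≤ p ω) (hf : StronglyMeasurable[m] f) (hf_int : Integrable f μ[|s]) :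
    Integrable f μ := by
  have hf_restrict : Integrable f (μ.restrict s) :=
    hf_int.of_measure_le_smul (measure_ne_top μ s) restrict_eq_measure_smul_cond.le
  refine integrable_of_integrable_trim hm ((hf_restrict.trim hm hf).of_measure_le_smul ?_
    (trim_le_smul_trim_restrict hm hs hε hp hpε))
  exact ENNReal.inv_ne_top.2 (ENNReal.ofReal_pos.2 hε).ne'

lemma integrable_and_sub_ae_eq_condExp_of_cond [IsFiniteMeasure μ] (hm : m ≤ m₀)
    (hs : MeasurableSet s) (hε : 0 < ε) (hp : p =ᵐ[μ] μ[s.indicator (fun _ => (1 : ℝ))|m])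
    (hpε : ∀ᵐ ω ∂μ, ε ≤ p ω) {D v F F' Q Q' : Ω → ℝ} (hv : StronglyMeasurable[m] v)
    (hvμ : v =ᵐ[μ] μ[D|m]) (hvs : v =ᵐ[μ[|s]] μ[|s][D|m])
    (hF : Integrable F μ[|s]) (hF' : Integrable F' μ[|s])
    (hFD : μ[|s][F - F'|m] =ᵐ[μ[|s]] μ[|s][D|m])
    (hQ : StronglyMeasurable[m] Q) (hQ' : StronglyMeasurable[m] Q')
    (hQF : Q =ᵐ[μ[|s]] μ[|s][F|m]) (hQF' : Q' =ᵐ[μ[|s]] μ[|s][F'|m]) :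
    Integrable Q μ ∧ Integrable Q' μ ∧ Q - Q' =ᵐ[μ] μ[D|m] := by
  refine ⟨(integrable_condExp.congr hQF.symm).of_cond hm hs hε hp hpε hQ,
    (integrable_condExp.congr hQF'.symm).of_cond hm hs hε hp hpε hQ', ?_⟩
  have hQv : Q - Q' =ᵐ[μ[|s]] v :=
    calc Q - Q' =ᵐ[μ[|s]] μ[|s][F|m] - μ[|s][F'|m] := hQF.sub hQF'
      _ =ᵐ[μ[|s]] μ[|s][F - F'|m] := (condExp_sub hF hF' m).symm
      _ =ᵐ[μ[|s]] μ[|s][D|m] := hFD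
      _ =ᵐ[μ[|s]] v := hvs.symm
  exact (ae_eq_of_ae_eq_cond hm hs hε hp hpε (hQ.sub hQ') hv hQv).trans hvμ

end ProbabilityTheory

theorem per_period_identification_general
    {Ω : Type*} [inst : MeasurableSpace Ω] (P : Measure Ω) [IsProbabilityMeasure P]
    (k : ℕ) (hk : 1 ≤ k)
    (B : ℕ → Set Ω)
    (hBmeas : ∀ m, m ≤ k → MeasurableSet (B m))
    (hBmono : ∀ m, m < k → B (m + 1) ⊆ B m)
    (hB0 : P (B 0) = 1)
    (𝒲 : ℕ → MeasurableSpace Ω)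
    (h𝒲le : ∀ m, 1 ≤ m → m ≤ k → 𝒲 m ≤ inst)
    (h𝒲mono : ∀ m, 1 ≤ m → m < k → 𝒲 m ≤ 𝒲 (m + 1))
    (ε : ℝ) (hε : 0 < ε)
    (p : ℕ → Ω → ℝ)
    (hpver : ∀ m, 1 ≤ m → m ≤ k →
      p m =ᵐ[P[|B (m - 1)]] (P[|B (m - 1)])[(B m).indicator (fun _ => (1 : ℝ))|𝒲 m])
    (hppos : ∀ m, 1 ≤ m → m ≤ k → ∀ᵐ ω ∂P, ε ≤ p m ω)
    (Yk Yk' Ysk Ysk' : Ω → ℝ)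
    (hYkint : Integrable Yk P) (hYk'int : Integrable Yk' P)
    (hconsk : ∀ᵐ ω ∂P, ω ∈ B k → Ysk ω = Yk ω)
    (hconsk' : ∀ᵐ ω ∂P, ω ∈ B k → Ysk' ω = Yk' ω)
    (hPT : ∀ m, 1 ≤ m → m ≤ k → ∃ h : Ω → ℝ, Measurable[𝒲 m] h ∧
      h =ᵐ[P[|B (m - 1)]] (P[|B (m - 1)])[fun ω => Ysk ω - Ysk' ω|𝒲 m] ∧
      h =ᵐ[P[|B m]] (P[|B m])[fun ω => Ysk ω - Ysk' ω|𝒲 m])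
    (Qk Qk' : ℕ → Ω → ℝ)
    (hQktop : Qk (k + 1) = Yk)
    (hQkmeas : ∀ m, 1 ≤ m → m ≤ k → Measurable[𝒲 m] (Qk m))
    (hQkver : ∀ m, 1 ≤ m → m ≤ k → Qk m =ᵐ[P[|B m]] (P[|B m])[Qk (m + 1)|𝒲 m])
    (hQk'top : Qk' (k + 1) = Yk')
    (hQk'meas : ∀ m, 1 ≤ m → m ≤ k → Measurable[𝒲 m] (Qk' m))
    (hQk'ver : ∀ m, 1 ≤ m → m ≤ k → Qk' m =ᵐ[P[|B m]] (P[|B m])[Qk' (m + 1)|𝒲 m]) :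
    ∫ ω, (Ysk ω - Ysk' ω) ∂P = (∫ ω, Qk 1 ω ∂P) - ∫ ω, Qk' 1 ω ∂P := by
  set D : Ω → ℝ := fun ω => Ysk ω - Ysk' ω
  have hcond_cond : ∀ m, 1 ≤ m → m ≤ k → P[|B (m - 1)][|B m] = P[|B m] := fun m hm1 hmk => by
    rw [cond_cond_eq_cond_inter (hBmeas _ (by omega)) (hBmeas m hmk), Set.inter_eq_right.2
      (by simpa [Nat.sub_add_cancel hm1] using hBmono (m - 1) (by omega))]
  have step : ∀ m, 1 ≤ m → m ≤ k →
      Integrable (Qk (m + 1)) P[|B m] → Integrable (Qk' (m + 1)) P[|B m] →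
      P[|B m][Qk (m + 1) - Qk' (m + 1)|𝒲 m] =ᵐ[P[|B m]] P[|B m][D|𝒲 m] →
      Integrable (Qk m) P[|B (m - 1)] ∧ Integrable (Qk' m) P[|B (m - 1)] ∧
        Qk m - Qk' m =ᵐ[P[|B (m - 1)]] P[|B (m - 1)][D|𝒲 m] := by
    intro m hm1 hmk hF hF' hFD
    obtain ⟨v, hv, hvμ, hvs⟩ := hPT m hm1 hmk
    have hQ := hQkver m hm1 hmk
    have hQ' := hQk'ver m hm1 hmk
    rw [← hcond_cond m hm1 hmk] at hF hF' hFD hvs hQ hQ'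
    exact integrable_and_sub_ae_eq_condExp_of_cond (h𝒲le m hm1 hmk) (hBmeas m hmk) hε
      (hpver m hm1 hmk) (cond_absolutelyContinuous.ae_le (hppos m hm1 hmk)) hv.stronglyMeasurable
      hvμ hvs hF hF' hFD (hQkmeas m hm1 hmk).stronglyMeasurable
      (hQk'meas m hm1 hmk).stronglyMeasurable hQ hQ'
  have level : ∀ m, m ≤ k → 1 ≤ m →
      Integrable (Qk m) P[|B (m - 1)] ∧ Integrable (Qk' m) P[|B (m - 1)] ∧
        Qk m - Qk' m =ᵐ[P[|B (m - 1)]] P[|B (m - 1)][D|𝒲 m] := by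
    intro m hmk
    induction hmk using Nat.decreasingInduction with
    | self =>
      intro _
      refine step k hk le_rfl (hQktop ▸ hYkint.cond) (hQk'top ▸ hYk'int.cond) ?_
      rw [hQktop, hQk'top]
      refine condExp_congr_ae ?_
      filter_upwards [ae_cond_mem (hBmeas k le_rfl), cond_absolutelyContinuous.ae_le hconsk,
        cond_absolutelyContinuous.ae_le hconsk'] with ω hω hY hY'
      simp [D, hY hω, hY' hω]
    | of_succ j hjk ih =>
      intro hj1
      obtain ⟨hQ, hQ', hdiff⟩ := ih (by omega)
      rw [Nat.add_sub_cancel] at hQ hQ' hdiff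
      exact step j hj1 hjk.le hQ hQ' ((condExp_congr_ae hdiff).trans
        (condExp_condExp_of_le (h𝒲mono j hj1 hjk) (h𝒲le (j + 1) (by omega) hjk)))
  obtain ⟨hQ, hQ', hdiff⟩ := level 1 hk le_rfl
  rw [Nat.sub_self, cond_eq_self_of_measure_eq_one (hBmeas 0 (Nat.zero_le k)) hB0]
    at hQ hQ' hdiff
  calc ∫ ω, D ω ∂P = ∫ ω, P[D|𝒲 1] ω ∂P := (integral_condExp (h𝒲le 1 le_rfl hk)).symm
    _ = ∫ ω, (Qk 1 - Qk' 1) ω ∂P := integral_congr_ae hdiff.symm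
    _ = (∫ ω, Qk 1 ω ∂P) - ∫ ω, Qk' 1 ω ∂P := integral_sub hQ hQ'

/-- Per-period identification step. Under the core setup with horizon `k`,
let `Yk, Yk', Ysk, Ysk'` (standing for `Y_k, Y_{k-1}, Y_k*, Y_{k-1}*`) be integrable
with `Ysk = Yk` a.s. on `B k` and `Ysk' = Yk'` a.s. on `B k`. Assume parallel trends:
for every `1 ≤ m ≤ k` there is a `𝒲 m`-measurable `h` that is a version of
`E[Ysk - Ysk' | 𝒲 m]` both under `P[|B (m-1)]` and under `P[|B m]`. Then for any choice
of versions `Qk, Qk'` in the iterated conditional-expectation recursions built from the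
observed outcomes `Yk, Yk'`,
`E_P[Ysk - Ysk'] = φ_{k,k} - φ_{k-1,k} = E_P[Qk 1] - E_P[Qk' 1]`. -/
theorem per_period_identification
    {Ω : Type*} [inst : MeasurableSpace Ω] (P : Measure Ω) [IsProbabilityMeasure P]
    (k : ℕ) (hk : 1 ≤ k)
    (B : ℕ → Set Ω)
    (hBmeas : ∀ m, m ≤ k → MeasurableSet (B m))
    (hBmono : ∀ m, m < k → B (m + 1) ⊆ B m)
    (hB0 : P (B 0) = 1)
    (hBk : 0 < P (B k))
    (𝒲 : ℕ → MeasurableSpace Ω)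
    (h𝒲le : ∀ m, 1 ≤ m → m ≤ k → 𝒲 m ≤ inst)
    (h𝒲mono : ∀ m, 1 ≤ m → m < k → 𝒲 m ≤ 𝒲 (m + 1))
    (ε : ℝ) (hε : 0 < ε)
    (p : ℕ → Ω → ℝ)
    (hpmeas : ∀ m, 1 ≤ m → m ≤ k → Measurable[𝒲 m] (p m))
    (hpver : ∀ m, 1 ≤ m → m ≤ k →
      p m =ᵐ[P[|B (m - 1)]] (P[|B (m - 1)])[(B m).indicator (fun _ => (1 : ℝ))|𝒲 m])
    (hppos : ∀ m, 1 ≤ m → m ≤ k → ∀ᵐ ω ∂P, ε ≤ p m ω)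
    (Yk Yk' Ysk Ysk' : Ω → ℝ)
    (hYkint : Integrable Yk P) (hYk'int : Integrable Yk' P)
    (hYskint : Integrable Ysk P) (hYsk'int : Integrable Ysk' P)
    (hconsk : ∀ᵐ ω ∂P, ω ∈ B k → Ysk ω = Yk ω)
    (hconsk' : ∀ᵐ ω ∂P, ω ∈ B k → Ysk' ω = Yk' ω)
    (hPT : ∀ m, 1 ≤ m → m ≤ k → ∃ h : Ω → ℝ, Measurable[𝒲 m] h ∧
      h =ᵐ[P[|B (m - 1)]] (P[|B (m - 1)])[fun ω => Ysk ω - Ysk' ω|𝒲 m] ∧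
      h =ᵐ[P[|B m]] (P[|B m])[fun ω => Ysk ω - Ysk' ω|𝒲 m])
    (Qk Qk' : ℕ → Ω → ℝ)
    (hQktop : Qk (k + 1) = Yk)
    (hQkmeas : ∀ m, 1 ≤ m → m ≤ k → Measurable[𝒲 m] (Qk m))
    (hQkver : ∀ m, 1 ≤ m → m ≤ k → Qk m =ᵐ[P[|B m]] (P[|B m])[Qk (m + 1)|𝒲 m])
    (hQk'top : Qk' (k + 1) = Yk')
    (hQk'meas : ∀ m, 1 ≤ m → m ≤ k → Measurable[𝒲 m] (Qk' m))
    (hQk'ver : ∀ m, 1 ≤ m → m ≤ k → Qk' m =ᵐ[P[|B m]] (P[|B m])[Qk' (m + 1)|𝒲 m]) :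
    ∫ ω, (Ysk ω - Ysk' ω) ∂P = (∫ ω, Qk 1 ω ∂P) - ∫ ω, Qk' 1 ω ∂P :=
  per_period_identification_general (inst := inst) P k hk B hBmeas hBmono hB0 𝒲 h𝒲le h𝒲mono ε hε p
    hpver hppos Yk Yk' Ysk Ysk' hYkint hYk'int hconsk hconsk' hPT Qk Qk' hQktop hQkmeas hQkver
    hQk'top hQk'meas hQk'ver
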